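/- arXiv:1206.5046 — 2 statements merged into one kernel-verified Lean document; each statement's English description precedes it below -/
import Mathlib

section
/- For generalized Laguerre polynomials with parameter α > -1 and n ≥ 1, the integral ∫₀ˣ L_n^{(α)}(y) e^{-y} y^α dy equals (1/n) e^{-x} x^{α+1} L_{n-1}^{(α+1)}(x). -/
/-!
For `y > 0` the function `e^{-y} y^{α+1} L_{n-1}^{(α+1)}(y)` has derivative
`n e^{-y} y^α L_n^{(α)}(y)`. After factoring out `e^{-y} y^α` this is the polynomial identity
`n L_n^{(α)} = (α + 1 - X) L_{n-1}^{(α+1)} + X (L_{n-1}^{(α+1)})'`, which coefficientwise is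
Pascal's rule for `n.choose k` combined with `Γ(s + 1) = s Γ(s)`. Since `α + 1 > 0` the
antiderivative vanishes at `0`, and the fundamental theorem of calculus gives the integral.
-/

open MeasureTheory intervalIntegral

noncomputable def laguerre (α : ℝ) (n : ℕ) (x : ℝ) : ℝ :=
  ∑ k ∈ Finset.range (n + 1),
    (-1 : ℝ) ^ k * Real.Gamma (α + n + 1) /
      (Real.Gamma (α + k + 1) * (Nat.factorial (n - k)) * (Nat.factorial k)) * x ^ k

open Finset Polynomial
open scoped Nat

-- Written with `n.choose k` so that it vanishes for `k > n`.
noncomputable def laguerreCoeff (α : ℝ) (n k : ℕ) : ℝ :=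
  (-1) ^ k * Real.Gamma (α + n + 1) / (n ! * Real.Gamma (α + k + 1)) * n.choose k

noncomputable def laguerrePoly (α : ℝ) (n : ℕ) : ℝ[X] :=
  ∑ k ∈ range (n + 1), C (laguerreCoeff α n k) * X ^ k

theorem coeff_laguerrePoly (α : ℝ) (n k : ℕ) :
    (laguerrePoly α n).coeff k = laguerreCoeff α n k := by
  simp only [laguerrePoly, finsetSum_coeff, coeff_C_mul_X_pow, sum_ite_eq, mem_range]
  split_ifs with hk
  · rfl
  · simp [laguerreCoeff, Nat.choose_eq_zero_of_lt (not_lt.mp hk)]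

theorem eval_laguerrePoly (α : ℝ) (n : ℕ) (x : ℝ) :
    (laguerrePoly α n).eval x = laguerre α n x := by
  simp only [laguerrePoly, eval_finsetSum, eval_mul, eval_C, eval_pow, eval_X, laguerre]
  refine sum_congr rfl fun k hk => ?_
  rw [laguerreCoeff, Nat.cast_choose ℝ (mem_range_succ_iff.mp hk)]
  field_simp

theorem laguerreCoeff_succ_zero {α : ℝ} (hα : -1 < α) (m : ℕ) :
    (m + 1) * laguerreCoeff α (m + 1) 0 = (α + 1) * laguerreCoeff (α + 1) m 0 := by
  have hα₁ : α + 1 ≠ 0 := by linarith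
  have hΓ : Real.Gamma (α + 1) ≠ 0 := (Real.Gamma_pos_of_pos (by linarith)).ne'
  have hΓ_succ : Real.Gamma (α + 1 + 1) = (α + 1) * Real.Gamma (α + 1) := Real.Gamma_add_one hα₁
  have hΓ_top : α + ((m + 1 : ℕ) : ℝ) + 1 = α + 1 + m + 1 := by push_cast; ring
  simp only [laguerreCoeff, hΓ_succ, hΓ_top, Nat.cast_zero, add_zero, Nat.choose_zero_right,
    pow_zero, Nat.factorial_succ]
  push_cast
  field_simp

theorem laguerreCoeff_succ_succ {α : ℝ} (hα : -1 < α) (m k : ℕ) :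
    (m + 1) * laguerreCoeff α (m + 1) (k + 1) =
      (α + 1 + (k + 1)) * laguerreCoeff (α + 1) m (k + 1) - laguerreCoeff (α + 1) m k := by
  have hk : 0 < α + 1 + k + 1 := by linarith [k.cast_nonneg (α := ℝ)]
  have hΓ : Real.Gamma (α + 1 + k + 1) ≠ 0 := (Real.Gamma_pos_of_pos (by linarith)).ne'
  have hΓ_succ : Real.Gamma (α + 1 + (k + 1 : ℕ) + 1) =
      (α + 1 + k + 1) * Real.Gamma (α + 1 + k + 1) := by
    rw [← Real.Gamma_add_one hk.ne']; push_cast; ring_nf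
  have hΓ_top : α + ((m + 1 : ℕ) : ℝ) + 1 = α + 1 + m + 1 := by push_cast; ring
  have hΓ_k : α + ((k + 1 : ℕ) : ℝ) + 1 = α + 1 + k + 1 := by push_cast; ring
  simp only [laguerreCoeff, hΓ_succ, hΓ_top, hΓ_k, Nat.choose_succ_succ', Nat.factorial_succ]
  push_cast
  field_simp
  ring

theorem C_mul_laguerrePoly_succ {α : ℝ} (hα : -1 < α) (m : ℕ) :
    C ((m : ℝ) + 1) * laguerrePoly α (m + 1) =
      (C (α + 1) - X) * laguerrePoly (α + 1) m + X * derivative (laguerrePoly (α + 1) m) := by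
  ext (_ | k)
  · simp only [coeff_C_mul, sub_mul, coeff_add, coeff_sub, coeff_X_mul_zero, coeff_laguerrePoly,
      laguerreCoeff_succ_zero hα]
    ring
  · simp only [coeff_C_mul, sub_mul, coeff_add, coeff_sub, coeff_X_mul, coeff_derivative,
      coeff_laguerrePoly, laguerreCoeff_succ_succ hα]
    ring

theorem hasDerivAt_exp_neg_mul_rpow_mul_laguerre {α : ℝ} (hα : -1 < α) (m : ℕ) {y : ℝ}
    (hy : 0 < y) :
    HasDerivAt (fun t => Real.exp (-t) * t ^ (α + 1) * laguerre (α + 1) m t)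
      ((m + 1) * (laguerre α (m + 1) y * Real.exp (-y) * y ^ α)) y := by
  have hL := congrArg (eval y) (C_mul_laguerrePoly_succ hα m)
  simp only [eval_mul, eval_C, eval_add, eval_sub, eval_X, eval_laguerrePoly] at hL
  have h := ((hasDerivAt_neg y).exp.fun_mul
    (Real.hasDerivAt_rpow_const (p := α + 1) (Or.inl hy.ne'))).fun_mul
    ((laguerrePoly (α + 1) m).hasDerivAt y)
  simp only [eval_laguerrePoly] at h
  refine h.congr_deriv ?_
  rw [add_sub_cancel_right, Real.rpow_add_one hy.ne']
  linear_combination (-Real.exp (-y) * y ^ α) * hL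

theorem continuous_laguerre (α : ℝ) (n : ℕ) : Continuous (laguerre α n) := by
  simpa only [eval_laguerrePoly] using (laguerrePoly α n).continuous

theorem laguerre_integral_eq (α : ℝ) (hα : -1 < α) (n : ℕ) (hn : 1 ≤ n)
    (x : ℝ) (hx : 0 < x) :
    (∫ y in (0 : ℝ)..x, laguerre α n y * Real.exp (-y) * y ^ α) =
      (1 / (n : ℝ)) * Real.exp (-x) * x ^ (α + 1) * laguerre (α + 1) (n - 1) x := by
  obtain ⟨m, rfl⟩ : ∃ m, n = m + 1 := ⟨n - 1, by omega⟩
  have hexp : Continuous fun t : ℝ => Real.exp (-t) := by fun_prop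
  have hF : Continuous fun t => Real.exp (-t) * t ^ (α + 1) * laguerre (α + 1) m t :=
    (hexp.mul (Real.continuous_rpow_const (by linarith))).mul (continuous_laguerre _ _)
  have hIntegrable : IntervalIntegrable (fun y => laguerre α (m + 1) y * Real.exp (-y) * y ^ α)
      volume 0 x :=
    (intervalIntegrable_rpow' hα).continuousOn_mul
      ((continuous_laguerre α (m + 1)).mul hexp).continuousOn
  have hFTC := integral_eq_sub_of_hasDerivAt_of_le hx.le hF.continuousOn
    (fun t ht => hasDerivAt_exp_neg_mul_rpow_mul_laguerre hα m ht.1) (hIntegrable.const_mul _)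
  rw [intervalIntegral.integral_const_mul, Real.zero_rpow (by linarith), mul_zero, zero_mul,
    sub_zero] at hFTC
  rw [Nat.add_sub_cancel, Nat.cast_succ]
  field_simp
  linear_combination hFTC
end

section
/- For Hermite polynomials and n ≥ 1, the diagonal integral a_{n,n}(x) := ∫_{-∞}^x e^{-y²} H_n(y)² dy satisfies a_{n,n}(x) = −H_{n-1}(x) H_n(x) e^{-x²} + 2n · a_{n-1,n-1}(x), with a_{0,0}(x) = √π · Φ(√2 x), where Φ is the standard normal cumulative distribution function. -/
open MeasureTheory

/-- Physicists' Hermite polynomials. -/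
noncomputable def hermite : ℕ → ℝ → ℝ
  | 0, _ => 1
  | 1, x => 2 * x
  | n + 2, x => 2 * x * hermite (n + 1) x - 2 * ((n : ℝ) + 1) * hermite n x

/-- `a_{n,n}(x) = ∫_{-∞}^x e^{-y²} H_n(y)² dy`. -/
noncomputable def hermiteDiag (n : ℕ) (x : ℝ) : ℝ :=
  ∫ y in Set.Iic x, Real.exp (-y ^ 2) * (hermite n y) ^ 2

/-- Standard normal cumulative distribution function. -/
noncomputable def stdNormalCdf (x : ℝ) : ℝ :=
  (Real.sqrt (2 * Real.pi))⁻¹ * ∫ t in Set.Iic x, Real.exp (-t ^ 2 / 2)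

/-!
Since `H_n' = 2n H_{n-1}` and `H_{n+1} = 2x H_n - 2n H_{n-1}`, the function
`H_n H_{n+1} e^{-x²}` has derivative `e^{-x²} (2(n+1) H_n² - H_{n+1}²)`. Polynomials times a
Gaussian are integrable and vanish at `-∞`, so integrating this derivative over `(-∞, x]` gives
the recursion. The case `n = 0` is the substitution `t = √2 y` in the Gaussian integral.
-/

open Filter Real Set Topology
open scoped Polynomial

theorem integral_comp_mul_left_Iic {E : Type*} [NormedAddCommGroup E] [NormedSpace ℝ E]
    (g : ℝ → E) (a : ℝ) {b : ℝ} (hb : 0 < b) :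
    ∫ x in Iic a, g (b * x) = b⁻¹ • ∫ x in Iic (b * a), g x := by
  rw [← integral_indicator measurableSet_Iic, ← integral_indicator measurableSet_Iic,
    ← abs_of_pos (inv_pos.mpr hb), ← Measure.integral_comp_mul_left]
  congr
  ext1 x
  rw [← indicator_comp_right, preimage_const_mul_Iic₀ _ hb, mul_div_cancel_left₀ _ hb.ne',
    Function.comp_def]

theorem integral_Iic_exp_neg_sq (x : ℝ) :
    ∫ y in Iic x, exp (-y ^ 2) = √π * stdNormalCdf (√2 * x) := by
  have hs2 : 0 < √2 := by positivity
  have hscale : ∀ y : ℝ, exp (-y ^ 2) = exp (-(√2 * y) ^ 2 / 2) := fun y => by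
    rw [mul_pow, sq_sqrt zero_le_two]; ring_nf
  simp_rw [hscale, integral_comp_mul_left_Iic (fun t => exp (-t ^ 2 / 2)) x hs2, stdNormalCdf,
    sqrt_mul zero_le_two, smul_eq_mul]
  field_simp

namespace Polynomial

variable {b : ℝ}

theorem integrable_eval_mul_exp_neg_mul_sq (p : ℝ[X]) (hb : 0 < b) :
    Integrable fun y => p.eval y * exp (-b * y ^ 2) := by
  simp_rw [eval_eq_sum_range, Finset.sum_mul, mul_assoc]
  refine integrable_finsetSum _ fun k _ => Integrable.const_mul ?_ _
  have hk : (-1 : ℝ) < k := by linarith [k.cast_nonneg (α := ℝ)]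
  simpa [rpow_natCast] using integrable_rpow_mul_exp_neg_mul_sq hb hk

theorem tendsto_eval_mul_exp_neg_mul_sq_cocompact (p : ℝ[X]) (hb : 0 < b) :
    Tendsto (fun y => p.eval y * exp (-b * y ^ 2)) (cocompact ℝ) (𝓝 0) := by
  simp_rw [eval_eq_sum_range, Finset.sum_mul, mul_assoc]
  rw [← Finset.sum_const_zero (s := Finset.range (p.natDegree + 1))]
  refine tendsto_finsetSum _ fun k _ => ?_
  rw [← mul_zero (p.coeff k)]
  refine Tendsto.const_mul _ (tendsto_zero_iff_norm_tendsto_zero.mpr ?_)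
  simpa [rpow_natCast, abs_of_pos (exp_pos _)] using
    tendsto_rpow_abs_mul_exp_neg_mul_sq_cocompact hb k

end Polynomial

theorem hermite_succ (n : ℕ) (x : ℝ) :
    hermite (n + 1) x = 2 * x * hermite n x - 2 * n * hermite (n - 1) x := by
  cases n <;> simp [hermite]

theorem hasDerivAt_hermite : ∀ (n : ℕ) (x : ℝ),
    HasDerivAt (hermite n) (2 * n * hermite (n - 1) x) x
  | 0, x => by simpa [hermite] using hasDerivAt_const x (1 : ℝ)
  | 1, x => by simpa [hermite] using (hasDerivAt_id x).const_mul (2 : ℝ)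
  | n + 2, x => by
    have h := (((hasDerivAt_id' x).const_mul 2).mul (hasDerivAt_hermite (n + 1) x)).sub
      ((hasDerivAt_hermite n x).const_mul (2 * ((n : ℝ) + 1)))
    refine h.congr_deriv ?_
    rw [show n + 2 - 1 = n + 1 by omega, hermite_succ n x]
    push_cast
    ring

theorem exists_eval_eq_hermite : ∀ n : ℕ, ∃ p : ℝ[X], ∀ y, p.eval y = hermite n y
  | 0 => ⟨1, fun y => by simp [hermite]⟩
  | 1 => ⟨Polynomial.C 2 * Polynomial.X, fun y => by simp [hermite]⟩
  | n + 2 => by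
    obtain ⟨p, hp⟩ := exists_eval_eq_hermite n
    obtain ⟨q, hq⟩ := exists_eval_eq_hermite (n + 1)
    exact ⟨Polynomial.C 2 * Polynomial.X * q - Polynomial.C (2 * ((n : ℝ) + 1)) * p,
      fun y => by simp [hermite, hp, hq]⟩

theorem integrable_exp_neg_sq_mul_hermite_sq (n : ℕ) :
    Integrable fun y => exp (-y ^ 2) * hermite n y ^ 2 := by
  obtain ⟨p, hp⟩ := exists_eval_eq_hermite n
  refine ((p ^ 2).integrable_eval_mul_exp_neg_mul_sq one_pos).congr (.of_forall fun y => ?_)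
  simp [hp, mul_comm]

theorem tendsto_hermite_mul_hermite_mul_exp_neg_sq_atBot (n m : ℕ) :
    Tendsto (fun y => hermite n y * hermite m y * exp (-y ^ 2)) atBot (𝓝 0) := by
  obtain ⟨p, hp⟩ := exists_eval_eq_hermite n
  obtain ⟨q, hq⟩ := exists_eval_eq_hermite m
  simpa [← hp, ← hq] using
    ((p * q).tendsto_eval_mul_exp_neg_mul_sq_cocompact one_pos).mono_left atBot_le_cocompact

theorem hasDerivAt_hermite_mul_hermite_succ_mul_exp_neg_sq (n : ℕ) (y : ℝ) :
    HasDerivAt (fun y => hermite n y * hermite (n + 1) y * exp (-y ^ 2))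
      (2 * (n + 1) * (exp (-y ^ 2) * hermite n y ^ 2) - exp (-y ^ 2) * hermite (n + 1) y ^ 2)
      y := by
  have h := ((hasDerivAt_hermite n y).mul (hasDerivAt_hermite (n + 1) y)).mul
    ((hasDerivAt_pow 2 y).neg.exp)
  refine h.congr_deriv ?_
  simp only [add_tsub_cancel_right, hermite_succ n y, Pi.mul_apply, Pi.neg_apply]
  push_cast
  ring

theorem hermiteDiag_succ (n : ℕ) (x : ℝ) :
    hermiteDiag (n + 1) x =
      -(hermite n x * hermite (n + 1) x * exp (-x ^ 2)) + 2 * (n + 1) * hermiteDiag n x := by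
  have hn := integrable_exp_neg_sq_mul_hermite_sq n
  have hn1 := integrable_exp_neg_sq_mul_hermite_sq (n + 1)
  have hftc := integral_Iic_of_hasDerivAt_of_tendsto' (a := x)
    (fun y _ => hasDerivAt_hermite_mul_hermite_succ_mul_exp_neg_sq n y)
    ((hn.const_mul _).sub hn1).integrableOn
    (tendsto_hermite_mul_hermite_mul_exp_neg_sq_atBot n (n + 1))
  rw [integral_sub (hn.const_mul _).integrableOn hn1.integrableOn, integral_const_mul] at hftc
  rw [hermiteDiag, hermiteDiag]
  linarith

theorem hermiteDiag_recursion (x : ℝ) :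
    hermiteDiag 0 x = Real.sqrt Real.pi * stdNormalCdf (Real.sqrt 2 * x) ∧
      ∀ n : ℕ, 1 ≤ n →
        hermiteDiag n x =
          -(hermite (n - 1) x * hermite n x * Real.exp (-x ^ 2)) +
            2 * (n : ℝ) * hermiteDiag (n - 1) x := by
  refine ⟨by simpa [hermiteDiag, hermite] using integral_Iic_exp_neg_sq x, fun n hn => ?_⟩
  obtain ⟨n, rfl⟩ := Nat.exists_eq_add_of_le' hn
  simpa using hermiteDiag_succ n x
end
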